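/- Let d ≥ 4 and let e, k ∈ E be signed unit vectors with k ≠ e. Then P_k(H_{{0,e}} < ∞) < 1/2: the probability that the simple random walk started at k ever visits the two-point set {0, e} is strictly less than one half. -/

import Mathlib

open scoped Classical
noncomputable section

/-- `v` is one of the `2d` signed unit vectors of `ℤ^d`. -/
def IsUnitVec {d : ℕ} (v : Fin d → ℤ) : Prop := ∑ k, |v k| = 1

/-- The steps of a simple random walk, indexed by a direction and a sign:
`step (i, true) = e_i` and `step (i, false) = -e_i`. -/
def step {d : ℕ} (e : Fin d × Bool) : Fin d → ℤ :=
  fun k => if k = e.1 then (if e.2 then 1 else -1) else 0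

/-- The position after `m` steps of the walk started at `k` following the word `ω`. -/
def walkPos {d : ℕ} (k : Fin d → ℤ) {M : ℕ} (ω : Fin M → Fin d × Bool) (m : ℕ) :
    Fin d → ℤ :=
  k + ∑ j : Fin M, if (j : ℕ) < m then step (ω j) else 0

/-- `P_k(H_Λ < ∞)`: the probability that the simple random walk on `ℤ^d` started at `k`
visits `Λ` at some time `m ≥ 1`.  Since the steps are independent and uniform on the
`2d` signed unit vectors, this equals the supremum over finite horizons `M` of the
fraction of the `(2d)^M` equiprobable step words of length `M` whose walk visits `Λ`
by time `M`. -/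
def hitProb {d : ℕ} (k : Fin d → ℤ) (Λ : Set (Fin d → ℤ)) : ℝ :=
  ⨆ M : ℕ,
    ((Finset.univ.filter fun ω : Fin M → Fin d × Bool =>
        ∃ m, 1 ≤ m ∧ m ≤ M ∧ walkPos k ω m ∈ Λ).card : ℝ) / (2 * d) ^ M

/-!
Let `h(x) = 1 / (|x|² + 2) + 1/2 · 𝟙[x = 0]`. For `d ≥ 4`, `h` is superharmonic for the simple
random walk, hence so is `F(x) = h(x) + h(x - e)`. First-step analysis by induction on the horizon
shows that a nonnegative superharmonic `F` with `F ≥ c` on `Λ` bounds the hitting probability of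
`Λ` from `x` by `F(x) / c`. Here `F ≥ 1 + 1/3` on `{0, e}`, while `|k - e|² ≥ 2` gives
`F(k) ≤ 1/3 + 1/4`, so the probability is at most `7/16`.
-/

open Finset

section Walk

variable {d : ℕ}

lemma walkPos_zero (x : Fin d → ℤ) {M : ℕ} (ω : Fin M → Fin d × Bool) :
    walkPos x ω 0 = x := by
  simp [walkPos]

lemma walkPos_cons_succ (x : Fin d → ℤ) {M : ℕ} (s : Fin d × Bool) (ω : Fin M → Fin d × Bool)
    (m : ℕ) : walkPos x (Fin.cons s ω : Fin (M + 1) → Fin d × Bool) (m + 1) =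
      walkPos (x + step s) ω m := by
  simp [walkPos, Fin.sum_univ_succ, add_assoc]

def visitWords (x : Fin d → ℤ) (Λ : Set (Fin d → ℤ)) (M : ℕ) :
    Finset (Fin M → Fin d × Bool) :=
  univ.filter fun ω => ∃ m ≤ M, walkPos x ω m ∈ Λ

lemma visitWords_of_mem {x : Fin d → ℤ} {Λ : Set (Fin d → ℤ)} (hx : x ∈ Λ) (M : ℕ) :
    visitWords x Λ M = univ :=
  filter_true_of_mem fun ω _ => ⟨0, M.zero_le, by rwa [walkPos_zero]⟩

lemma visitWords_zero_of_notMem {x : Fin d → ℤ} {Λ : Set (Fin d → ℤ)} (hx : x ∉ Λ) :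
    visitWords x Λ 0 = ∅ :=
  filter_false_of_mem fun ω _ ⟨m, hm, hmΛ⟩ => hx <| by
    rwa [Nat.le_zero.1 hm, walkPos_zero] at hmΛ

lemma card_visitWords_succ_of_notMem {x : Fin d → ℤ} {Λ : Set (Fin d → ℤ)} (hx : x ∉ Λ)
    (M : ℕ) : #(visitWords x Λ (M + 1)) = ∑ s, #(visitWords (x + step s) Λ M) := by
  have hcons : ∀ s (ω : Fin M → Fin d × Bool),
      (∃ m ≤ M + 1, walkPos x (Fin.cons s ω : Fin (M + 1) → _) m ∈ Λ) ↔
        ∃ m ≤ M, walkPos (x + step s) ω m ∈ Λ := by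
    refine fun s ω => ⟨?_, fun ⟨m, hm, hmΛ⟩ => ⟨m + 1, by omega, by rwa [walkPos_cons_succ]⟩⟩
    rintro ⟨_ | m, hm, hmΛ⟩
    · exact absurd (walkPos_zero x _ ▸ hmΛ) hx
    · exact ⟨m, by omega, by rwa [walkPos_cons_succ] at hmΛ⟩
  simp only [visitWords, card_filter]
  rw [← (Fin.consEquiv fun _ => Fin d × Bool).sum_comp, Fintype.sum_prod_type]
  exact sum_congr rfl fun s _ => sum_congr rfl fun ω _ => if_congr (hcons s ω) rfl rfl

def IsSuperharmonic (F : (Fin d → ℤ) → ℝ) : Prop :=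
  ∀ x, ∑ s : Fin d × Bool, F (x + step s) ≤ 2 * d * F x

lemma card_stepWords (M : ℕ) : (Fintype.card (Fin M → Fin d × Bool) : ℝ) = (2 * d) ^ M := by
  simp [Fintype.card_prod, mul_comm]

lemma IsSuperharmonic.add {F G : (Fin d → ℤ) → ℝ} (hF : IsSuperharmonic F)
    (hG : IsSuperharmonic G) : IsSuperharmonic (F + G) := fun x => by
  simp only [Pi.add_apply, sum_add_distrib, mul_add]
  exact add_le_add (hF x) (hG x)

lemma IsSuperharmonic.comp_sub_right {F : (Fin d → ℤ) → ℝ} (hF : IsSuperharmonic F)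
    (a : Fin d → ℤ) : IsSuperharmonic fun x => F (x - a) := fun x => by
  simpa only [add_sub_right_comm] using hF (x - a)

theorem mul_card_visitWords_le {F : (Fin d → ℤ) → ℝ} (hF₀ : ∀ x, 0 ≤ F x)
    (hF : IsSuperharmonic F) {Λ : Set (Fin d → ℤ)} {c : ℝ} (hΛ : ∀ y ∈ Λ, c ≤ F y)
    (M : ℕ) (x : Fin d → ℤ) : c * #(visitWords x Λ M) ≤ (2 * d) ^ M * F x := by
  have hmem : ∀ M x, x ∈ Λ → c * #(visitWords x Λ M) ≤ (2 * d) ^ M * F x := fun M x hx => by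
    rw [visitWords_of_mem hx, card_univ, card_stepWords, mul_comm]
    exact mul_le_mul_of_nonneg_left (hΛ x hx) (by positivity)
  induction M generalizing x with
  | zero =>
    by_cases hx : x ∈ Λ
    · exact hmem 0 x hx
    · simpa [visitWords_zero_of_notMem hx] using hF₀ x
  | succ M ih =>
    by_cases hx : x ∈ Λ
    · exact hmem _ x hx
    rw [card_visitWords_succ_of_notMem hx, Nat.cast_sum, mul_sum]
    calc ∑ s, c * #(visitWords (x + step s) Λ M)
        ≤ ∑ s, (2 * d) ^ M * F (x + step s) := sum_le_sum fun s _ => ih _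
      _ ≤ (2 * d) ^ (M + 1) * F x := by
          rw [← mul_sum, pow_succ, mul_assoc]
          exact mul_le_mul_of_nonneg_left (hF x) (by positivity)

theorem hitProb_le_of_isSuperharmonic (hd : 0 < d) {F : (Fin d → ℤ) → ℝ} (hF₀ : ∀ x, 0 ≤ F x)
    (hF : IsSuperharmonic F) {Λ : Set (Fin d → ℤ)} {c : ℝ} (hc : 0 < c)
    (hΛ : ∀ y ∈ Λ, c ≤ F y) (k : Fin d → ℤ) : hitProb k Λ ≤ F k / c := by
  refine ciSup_le fun M => ?_
  rw [div_le_div_iff₀ (by positivity) hc]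
  calc _ ≤ (#(visitWords k Λ M) : ℝ) * c := by
        gcongr
        exact monotone_filter_right _ fun ω _ ⟨m, _, hm, hmΛ⟩ => ⟨m, hm, hmΛ⟩
    _ ≤ (2 * d) ^ M * F k := by rw [mul_comm]; exact mul_card_visitWords_le hF₀ hF hΛ M k
    _ = F k * (2 * d) ^ M := mul_comm _ _

end Walk

lemma dotProduct_self_nonneg {n R : Type*} [Fintype n] [Ring R] [LinearOrder R]
    [IsStrictOrderedRing R] (v : n → R) : 0 ≤ v ⬝ᵥ v :=
  sum_nonneg fun i _ => mul_self_nonneg (v i)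

section Potential

variable {d : ℕ}

lemma step_eq_single (i : Fin d) (b : Bool) :
    step (i, b) = Pi.single i (if b then 1 else -1) := by
  ext j
  by_cases h : j = i <;> simp [step, h]

lemma step_injective : Function.Injective (step (d := d)) := by
  rintro ⟨i, b⟩ ⟨j, c⟩ h
  have hi := congr_fun h i
  have hj := congr_fun h j
  by_cases hij : i = j <;> cases b <;> cases c <;> simp_all [step]

lemma dotProduct_self_add_step (x : Fin d → ℤ) (i : Fin d) (b : Bool) :
    (x + step (i, b)) ⬝ᵥ (x + step (i, b)) = x ⬝ᵥ x + 2 * (if b then x i else -x i) + 1 := by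
  rw [step_eq_single]
  cases b <;> simp [add_dotProduct, dotProduct_add, dotProduct_comm (Pi.single _ _) x] <;> ring

lemma dotProduct_self_step (s : Fin d × Bool) : step s ⬝ᵥ step s = 1 := by
  obtain ⟨i, b⟩ := s
  simpa using dotProduct_self_add_step 0 i b

lemma IsUnitVec.dotProduct_self {v : Fin d → ℤ} (hv : IsUnitVec v) : v ⬝ᵥ v = 1 := by
  have hle : ∀ i, |v i| ≤ 1 := fun i =>
    hv ▸ single_le_sum (f := fun j => |v j|) (fun j _ => abs_nonneg _) (mem_univ i)
  have hsq : ∀ i, v i * v i = |v i| := fun i => by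
    have := hle i
    rcases abs_cases (v i) with ⟨h, _⟩ | ⟨h, _⟩ <;> nlinarith
  simp only [dotProduct, hsq]
  exact hv

lemma IsUnitVec.neg {v : Fin d → ℤ} (hv : IsUnitVec v) : IsUnitVec (-v) := by
  simpa [IsUnitVec] using hv

lemma two_le_dotProduct_self_sub {u v : Fin d → ℤ} (hu : IsUnitVec u) (hv : IsUnitVec v)
    (hne : u ≠ v) : 2 ≤ (u - v) ⬝ᵥ (u - v) := by
  have hpos : 0 < (u - v) ⬝ᵥ (u - v) := lt_of_le_of_ne (dotProduct_self_nonneg _)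
    (Ne.symm (dotProduct_self_eq_zero.not.2 (sub_ne_zero.2 hne)))
  have hexp : (u - v) ⬝ᵥ (u - v) = 2 - 2 * (u ⬝ᵥ v) := by
    simp only [sub_dotProduct, dotProduct_sub, hu.dotProduct_self, hv.dotProduct_self,
      dotProduct_comm v u]
    ring
  omega

lemma one_div_add_one_div_sub_le {v t w : ℝ} (hv : 0 < v) (htw : t ^ 2 ≤ w) (hwv : w < v ^ 2) :
    1 / (v + t) + 1 / (v - t) ≤ 2 / v + 2 * t ^ 2 / (v * (v ^ 2 - w)) := by
  have hvt : 0 < v ^ 2 - t ^ 2 := by linarith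
  have hpos : 0 < v + t ∧ 0 < v - t := by
    constructor <;> nlinarith [abs_le_of_sq_le_sq' (le_of_lt (by linarith : t ^ 2 < v ^ 2)) hv.le]
  have hsum : 1 / (v + t) + 1 / (v - t) = 2 / v + 2 * t ^ 2 / (v * (v ^ 2 - t ^ 2)) := by
    field_simp [hpos.1.ne', hpos.2.ne', hvt.ne']
    ring
  rw [hsum]
  gcongr

lemma sum_inv_dotProduct_self_add_step_le (x : Fin d → ℤ) :
    ∑ s : Fin d × Bool, 1 / (((x + step s) ⬝ᵥ (x + step s) : ℤ) + 2 : ℝ) ≤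
      2 * d / ((x ⬝ᵥ x : ℤ) + 3) + 8 * (x ⬝ᵥ x : ℤ) /
        (((x ⬝ᵥ x : ℤ) + 3) * (((x ⬝ᵥ x : ℤ) + 3) ^ 2 - 4 * (x ⬝ᵥ x : ℤ)) : ℝ) := by
  set q : ℝ := ((x ⬝ᵥ x : ℤ) : ℝ) with hq
  have hq_sum : q = ∑ i, (x i : ℝ) * x i := by simp [hq, dotProduct]
  have hq₀ : 0 ≤ q := Int.cast_nonneg (dotProduct_self_nonneg x)
  have hcoord : ∀ i, (2 * (x i : ℝ)) ^ 2 ≤ 4 * q := fun i => by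
    have := single_le_sum (f := fun j => (x j : ℝ) * x j) (fun j _ => mul_self_nonneg _)
      (mem_univ i)
    rw [hq_sum]
    nlinarith
  have hw : 4 * q < (q + 3) ^ 2 := by nlinarith
  rw [Fintype.sum_prod_type]
  calc _ ≤ ∑ i, (2 / (q + 3) + 2 * (2 * (x i : ℝ)) ^ 2 / ((q + 3) * ((q + 3) ^ 2 - 4 * q))) :=
        sum_le_sum fun i _ => by
          simp only [Fintype.sum_bool, dotProduct_self_add_step, ↓reduceIte]
          refine le_of_eq_of_le ?_ (one_div_add_one_div_sub_le (by positivity) (hcoord i) hw)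
          push_cast [hq]
          ring
    _ = _ := by
        have hsq : ∑ i, 2 * (2 * (x i : ℝ)) ^ 2 = 8 * q := by
          rw [hq_sum, mul_sum]
          exact sum_congr rfl fun i _ => by ring
        rw [sum_add_distrib, sum_const, card_univ, Fintype.card_fin, nsmul_eq_mul, ← sum_div,
          hsq]
        ring

/-- `1 / (|x|² + 2)` is superharmonic once `d ≥ 4`, with slack `(d - 1) / 6 ≥ 1 / 2` at the unit
vectors; that slack pays for the extra mass `1 / 2` at the origin. -/
def potential (x : Fin d → ℤ) : ℝ := 1 / ((x ⬝ᵥ x : ℤ) + 2 : ℝ) + if x = 0 then 1 / 2 else 0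

lemma potential_zero : potential (0 : Fin d → ℤ) = 1 := by
  norm_num [potential]

lemma potential_of_dotProduct_self_eq_one {x : Fin d → ℤ} (h : x ⬝ᵥ x = 1) :
    potential x = 1 / 3 := by
  have hx : x ≠ 0 := by rintro rfl; simp at h
  norm_num [potential, h, hx]

lemma potential_le_of_two_le {x : Fin d → ℤ} (h : 2 ≤ x ⬝ᵥ x) : potential x ≤ 1 / 4 := by
  have hx : x ≠ 0 := by rintro rfl; simp at h
  have h' : (2 : ℝ) ≤ (x ⬝ᵥ x : ℤ) := by exact_mod_cast h
  simp only [potential, hx, if_false, add_zero]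
  gcongr
  linarith

lemma one_div_le_potential (x : Fin d → ℤ) : 1 / ((x ⬝ᵥ x : ℤ) + 2 : ℝ) ≤ potential x := by
  unfold potential
  split_ifs <;> norm_num

lemma potential_nonneg (x : Fin d → ℤ) : 0 ≤ potential x := by
  refine le_trans ?_ (one_div_le_potential x)
  have : (0 : ℝ) ≤ (x ⬝ᵥ x : ℤ) := Int.cast_nonneg (dotProduct_self_nonneg x)
  positivity

lemma sum_ite_add_step_eq_zero_le (x : Fin d → ℤ) :
    ∑ s : Fin d × Bool, (if x + step s = 0 then (1 / 2 : ℝ) else 0) ≤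
      if x ⬝ᵥ x = 1 then 1 / 2 else 0 := by
  by_cases h : ∃ s₀, step s₀ = -x
  · obtain ⟨s₀, hs₀⟩ := h
    have hx : x ⬝ᵥ x = 1 := by
      rw [← neg_neg x, ← hs₀, neg_dotProduct, dotProduct_neg, neg_neg, dotProduct_self_step]
    have hiff : ∀ s, x + step s = 0 ↔ s = s₀ := fun s => by
      rw [add_eq_zero_iff_neg_eq, ← hs₀, eq_comm, step_injective.eq_iff]
    simp [hiff, hx]
  · rw [not_exists] at h
    refine le_of_eq_of_le (sum_eq_zero fun s _ => if_neg fun hs => h s ?_) (by positivity)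
    exact (add_eq_zero_iff_neg_eq.1 hs).symm

theorem isSuperharmonic_potential (hd : 4 ≤ d) : IsSuperharmonic (potential (d := d)) := by
  intro x
  set q : ℝ := ((x ⬝ᵥ x : ℤ) : ℝ) with hq
  have hq₀ : 0 ≤ q := Int.cast_nonneg (dotProduct_self_nonneg x)
  have hd' : (4 : ℝ) ≤ d := by exact_mod_cast hd
  have hneighbours := sum_inv_dotProduct_self_add_step_le x
  have hzero := sum_ite_add_step_eq_zero_le x
  rw [← hq] at hneighbours
  rw [show ∑ s, potential (x + step s) = _ from sum_add_distrib]
  by_cases h₁ : x ⬝ᵥ x = 1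
  · have hq₁ : q = 1 := by rw [hq, h₁, Int.cast_one]
    rw [if_pos h₁] at hzero
    rw [hq₁] at hneighbours
    rw [potential_of_dotProduct_self_eq_one h₁]
    norm_num at hneighbours ⊢
    linarith
  · rw [if_neg h₁] at hzero
    have hw : 0 < (q + 3) ^ 2 - 4 * q := by nlinarith
    have hbound : 2 * d / (q + 3) + 8 * q / ((q + 3) * ((q + 3) ^ 2 - 4 * q)) ≤
        2 * d / (q + 2) := by
      rw [div_add_div _ _ (by positivity) (by positivity), div_le_div_iff₀ (by positivity)
        (by positivity)]
      nlinarith [mul_nonneg (mul_nonneg hq₀ hq₀) hq₀]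
    calc _ ≤ 2 * d * (1 / (q + 2)) + 0 := by
          rw [mul_one_div]
          exact add_le_add (hneighbours.trans hbound) hzero
      _ ≤ 2 * d * potential x := by
        rw [add_zero]
        exact mul_le_mul_of_nonneg_left (one_div_le_potential x) (by positivity)

end Potential

/-- **Appendix, main estimate.**  In dimension `d ≥ 4`, for signed unit vectors `k ≠ e`,
the probability that the simple random walk started at `k` ever visits the two-point
set `{0, e}` is strictly less than `1/2`. -/
theorem hitProb_pair_lt_half
    {d : ℕ} (hd : 4 ≤ d) (e k : Fin d → ℤ)
    (he : IsUnitVec e) (hk : IsUnitVec k) (hne : k ≠ e) :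
    hitProb k ({0, e} : Set (Fin d → ℤ)) < 1 / 2 := by
  set F : (Fin d → ℤ) → ℝ := potential + fun x => potential (x - e)
  have hF : IsSuperharmonic F :=
    (isSuperharmonic_potential hd).add ((isSuperharmonic_potential hd).comp_sub_right e)
  have hF₀ : ∀ x, 0 ≤ F x := fun x => add_nonneg (potential_nonneg _) (potential_nonneg _)
  have hpair : ∀ y ∈ ({0, e} : Set (Fin d → ℤ)), 4 / 3 ≤ F y := by
    rintro y (rfl | rfl)
    · simp only [F, Pi.add_apply, zero_sub, potential_zero,
        potential_of_dotProduct_self_eq_one he.neg.dotProduct_self]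
      norm_num
    · simp only [F, Pi.add_apply, sub_self, potential_zero,
        potential_of_dotProduct_self_eq_one he.dotProduct_self]
      norm_num
  have hstart : F k ≤ 7 / 12 := by
    have := potential_le_of_two_le (two_le_dotProduct_self_sub hk he hne)
    simp only [F, Pi.add_apply, potential_of_dotProduct_self_eq_one hk.dotProduct_self]
    linarith
  calc hitProb k {0, e} ≤ F k / (4 / 3) :=
        hitProb_le_of_isSuperharmonic (by omega) hF₀ hF (by norm_num) hpair k
    _ ≤ 7 / 12 / (4 / 3) := by gcongr
    _ < 1 / 2 := by norm_num
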